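/- arXiv:1204.5164 — 9 statements merged into one kernel-verified Lean document; each statement's English description precedes it below -/
import Mathlib

section
/- Let H be a complex Hadamard matrix of order n whose rows include two rows u and v satisfying uᵢ² = vᵢ² for all i. For a unimodular complex number α, define H(α) by replacing, for every index i with uᵢ + vᵢ = 0, the entry uᵢ by α·uᵢ and vᵢ by α·vᵢ (all other entries unchanged). Then H(α) is a complex Hadamard matrix for every unimodular α. -/
open Matrix Complex

def IsCHM {n : ℕ} (H : Matrix (Fin n) (Fin n) ℂ) : Prop :=
  (∀ i j, ‖H i j‖ = 1) ∧ H * H.conjTranspose = (n : ℂ) • 1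

/-- Parametrizing a pair of rows `r, s` with `uᵢ² = vᵢ²`: multiply by `α` the entries of
rows `r` and `s` in those columns where `H r j + H s j = 0`. -/
noncomputable def rowPairParam {n : ℕ} (H : Matrix (Fin n) (Fin n) ℂ) (r s : Fin n)
    (α : ℂ) : Matrix (Fin n) (Fin n) ℂ :=
  fun i j => if (i = r ∨ i = s) ∧ H r j + H s j = 0 then α * H i j else H i j

/-!
Write `u, v` for rows `r, s` and `S` for the set of columns where `u + v` vanishes, so that
`v = u` off `S` and `v = -u` on `S`. For any third row `w`, orthogonality of `u` and of `v` to `w`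
forces `∑_{j ∈ S} uⱼ w̄ⱼ = 0`; hence scaling `u` and `v` on `S` by `α` leaves `⟨u, w⟩` and
`⟨v, w⟩` unchanged, while `⟨u, v⟩` and the norms are unchanged because `|α| = 1`. So the Gram
matrix `H Hᴴ` is preserved.
-/

open Finset

theorem sum_filter_add_eq_zero_mul_eq_zero {K ι : Type*} [Field K] [DecidableEq K] [NeZero (2 : K)]
    [Fintype ι] {u v w : ι → K} (hsq : ∀ j, u j ^ 2 = v j ^ 2) (hu : u ⬝ᵥ w = 0) (hv : v ⬝ᵥ w = 0) :
    ∑ j with u j + v j = 0, u j * w j = 0 := by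
  have hterm : ∀ j, v j * w j = u j * w j - 2 * if u j + v j = 0 then u j * w j else 0 := by
    intro j
    split_ifs with h
    · linear_combination w j * h
    · have hfactor : (u j - v j) * (u j + v j) = 0 := by linear_combination hsq j
      linear_combination -w j * (mul_eq_zero.1 hfactor).resolve_right h
  have hsum : v ⬝ᵥ w = u ⬝ᵥ w - 2 * ∑ j with u j + v j = 0, u j * w j := by
    simp only [dotProduct, hterm, sum_sub_distrib, ← mul_sum, sum_filter]
  rw [hv, hu, zero_sub, zero_eq_neg] at hsum
  exact (mul_eq_zero.1 hsum).resolve_left two_ne_zero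

section

variable {n : ℕ} {H : Matrix (Fin n) (Fin n) ℂ} {r s i k : Fin n} {α : ℂ}

theorem norm_rowPairParam_apply (hα : ‖α‖ = 1) (i j : Fin n) :
    ‖rowPairParam H r s α i j‖ = ‖H i j‖ := by
  unfold rowPairParam
  split_ifs <;> simp [hα]

theorem rowPairParam_apply_of_not_eq_or_eq (hi : ¬(i = r ∨ i = s)) (j : Fin n) :
    rowPairParam H r s α i j = H i j :=
  if_neg fun h => hi h.1

theorem rowPairParam_apply_of_eq_or_eq (hi : i = r ∨ i = s) (j : Fin n) :
    rowPairParam H r s α i j = H i j + if H r j + H s j = 0 then (α - 1) * H i j else 0 := by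
  unfold rowPairParam
  by_cases hZ : H r j + H s j = 0
  · rw [if_pos ⟨hi, hZ⟩, if_pos hZ]; ring
  · rw [if_neg fun h => hZ h.2, if_neg hZ, add_zero]

theorem rowPairParam_mul_star_of_iff (hα : ‖α‖ = 1) (hik : (i = r ∨ i = s) ↔ (k = r ∨ k = s))
    (j : Fin n) :
    rowPairParam H r s α i j * star (rowPairParam H r s α k j) = H i j * star (H k j) := by
  have hαα : α * star α = 1 := by
    rw [RCLike.star_def, Complex.mul_conj, Complex.normSq_eq_norm_sq, hα]; norm_num
  unfold rowPairParam
  by_cases hZ : H r j + H s j = 0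
  · by_cases hi : i = r ∨ i = s
    · rw [if_pos ⟨hi, hZ⟩, if_pos ⟨hik.1 hi, hZ⟩, star_mul']
      linear_combination H i j * star (H k j) * hαα
    · rw [if_neg fun h => hi h.1, if_neg fun h => hi (hik.2 h.1)]
  · simp only [hZ, and_false, if_false]

theorem mul_conjTranspose_rowPairParam_apply_of_eq_or_eq (hH : (H * Hᴴ).IsDiag)
    (hsq : ∀ j, H r j ^ 2 = H s j ^ 2) (hi : i = r ∨ i = s) (hk : ¬(k = r ∨ k = s)) :
    (rowPairParam H r s α * (rowPairParam H r s α)ᴴ) i k = (H * Hᴴ) i k := by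
  let w := fun j => Hᴴ j k
  have horth : ∀ l, l ≠ k → H l ⬝ᵥ w = 0 := fun l hl => by
    rw [← mul_apply']; exact hH hl
  have hS : ∑ j with H r j + H s j = 0, H i j * w j = 0 := by
    rcases hi with rfl | rfl
    · exact sum_filter_add_eq_zero_mul_eq_zero hsq (horth i fun h => hk (.inl h.symm))
        (horth s fun h => hk (.inr h.symm))
    · simp_rw [add_comm (H r _)]
      exact sum_filter_add_eq_zero_mul_eq_zero (fun j => (hsq j).symm)
        (horth i fun h => hk (.inr h.symm)) (horth r fun h => hk (.inl h.symm))
  simp only [mul_apply, conjTranspose_apply, rowPairParam_apply_of_not_eq_or_eq hk,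
    rowPairParam_apply_of_eq_or_eq hi]
  have hS' : ∑ j, (if H r j + H s j = 0 then (α - 1) * H i j else 0) * star (H k j) = 0 := by
    simp only [ite_mul, zero_mul, ← sum_filter, mul_assoc, ← mul_sum]
    exact mul_eq_zero_of_right _ hS
  simp only [add_mul, sum_add_distrib, hS', add_zero]

theorem rowPairParam_mul_conjTranspose (hH : (H * Hᴴ).IsDiag) (hsq : ∀ j, H r j ^ 2 = H s j ^ 2)
    (hα : ‖α‖ = 1) :
    rowPairParam H r s α * (rowPairParam H r s α)ᴴ = H * Hᴴ := by
  ext i k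
  by_cases hik : (i = r ∨ i = s) ↔ (k = r ∨ k = s)
  · simp only [mul_apply, conjTranspose_apply, rowPairParam_mul_star_of_iff hα hik]
  by_cases hi : i = r ∨ i = s
  · exact mul_conjTranspose_rowPairParam_apply_of_eq_or_eq hH hsq hi
      fun hk => hik (iff_of_true hi hk)
  · have hk : k = r ∨ k = s := by tauto
    rw [← (isHermitian_mul_conjTranspose_self _).apply,
      ← (isHermitian_mul_conjTranspose_self H).apply,
      mul_conjTranspose_rowPairParam_apply_of_eq_or_eq hH hsq hk hi]

end

theorem rowPairParam_isCHM_general {n : ℕ} (H : Matrix (Fin n) (Fin n) ℂ) (hH : IsCHM H)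
    (r s : Fin n) (hsq : ∀ j, (H r j) ^ 2 = (H s j) ^ 2)
    (α : ℂ) (hα : ‖α‖ = 1) :
    IsCHM (rowPairParam H r s α) := by
  obtain ⟨hnorm, hgram⟩ := hH
  refine ⟨fun i j => by rw [norm_rowPairParam_apply hα, hnorm], ?_⟩
  rw [rowPairParam_mul_conjTranspose (hgram ▸ isDiag_smul_one _ _) hsq hα, hgram]

theorem rowPairParam_isCHM {n : ℕ} (H : Matrix (Fin n) (Fin n) ℂ) (hH : IsCHM H)
    (r s : Fin n) (hrs : r ≠ s) (hsq : ∀ j, (H r j) ^ 2 = (H s j) ^ 2)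
    (α : ℂ) (hα : ‖α‖ = 1) :
    IsCHM (rowPairParam H r s α) :=
  rowPairParam_isCHM_general H hH r s hsq α hα
end

section
/- Let H be a dephased complex Hadamard matrix with the block structure of the previous theorem and assume additionally b = a (so rows 2 and 3 are [1, a, a, x, y] and [1, a, a, x, −y]). For unimodular α, β, let H(α, β) be obtained by replacing y by α·y and w by α·β·w. Then H(α, β) is a complex Hadamard matrix for all unimodular α, β. -/
open Matrix Complex ComplexConjugate

/-- The block-structured matrix of Theorem `ch1newp`: rows partitioned `1+1+1+r+s`,
columns partitioned `1+1+1+p+q`. -/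
def blockH {p q r s : ℕ} (a b : ℂ) (x : Fin p → ℂ) (y : Fin q → ℂ)
    (z : Fin r → ℂ) (w : Fin s → ℂ)
    (A : Fin r → Fin p → ℂ) (B : Fin r → Fin q → ℂ)
    (C : Fin s → Fin p → ℂ) (D : Fin s → Fin q → ℂ) :
    Matrix (Fin 3 ⊕ (Fin r ⊕ Fin s)) (Fin 3 ⊕ (Fin p ⊕ Fin q)) ℂ :=
  fun i j =>
    match i, j with
    | Sum.inl i0, Sum.inl j0 =>
        if i0 = 0 then 1
        else if i0 = 1 then (if j0 = 0 then 1 else if j0 = 1 then a else b)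
        else (if j0 = 0 then 1 else if j0 = 1 then b else a)
    | Sum.inl i0, Sum.inr (Sum.inl jp) => if i0 = 0 then 1 else x jp
    | Sum.inl i0, Sum.inr (Sum.inr jq) =>
        if i0 = 0 then 1 else if i0 = 1 then y jq else -y jq
    | Sum.inr (Sum.inl ir), Sum.inl j0 => if j0 = 0 then 1 else z ir
    | Sum.inr (Sum.inl ir), Sum.inr (Sum.inl jp) => A ir jp
    | Sum.inr (Sum.inl ir), Sum.inr (Sum.inr jq) => B ir jq
    | Sum.inr (Sum.inr i's), Sum.inl j0 =>
        if j0 = 0 then 1 else if j0 = 1 then w i's else -w i's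
    | Sum.inr (Sum.inr i's), Sum.inr (Sum.inl jp) => C i's jp
    | Sum.inr (Sum.inr i's), Sum.inr (Sum.inr jq) => D i's jq

/-! When `b = a`, rows 2 and 3 of `H` agree on the first three columns, and so do columns 2
and 3 on the first three rows. So a unitary `M γ` acting only on coordinates 2, 3, fixing their sum
and multiplying their difference by `γ`, satisfies `M α * H * M (α β) = H(α, β)`: on the left it
turns the antisymmetric part `y` of rows 2, 3 into `α • y`, on the right the part `w` of columns
2, 3 into `α β • w`, and it fixes the top-left `3 × 3` block. Unitary factors preserve
`H Hᴴ = n • 1`. -/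

noncomputable def mix3 (γ : ℂ) : Matrix (Fin 3) (Fin 3) ℂ := fun i j =>
  if i = 0 then (if j = 0 then 1 else 0)
  else if j = 0 then 0
  else if i = j then (1 + γ) / 2 else (1 - γ) / 2

lemma mix3_mem_unitaryGroup {γ : ℂ} (hγ : ‖γ‖ = 1) : mix3 γ ∈ unitaryGroup (Fin 3) ℂ := by
  have h : γ * conj γ = 1 := by rw [mul_conj', hγ]; norm_num
  rw [mem_unitaryGroup_iff, star_eq_conjTranspose]
  ext i j
  fin_cases i <;> fin_cases j <;>
    simp [mix3, mul_apply, Fin.sum_univ_three, one_apply, map_div₀, map_ofNat] <;>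
    first
    | linear_combination h / 2
    | linear_combination -h / 2

lemma fromBlocks_mem_unitaryGroup {m n R : Type*} [Fintype m] [Fintype n] [DecidableEq m]
    [DecidableEq n] [CommRing R] [StarRing R] {U : Matrix m m R} {V : Matrix n n R}
    (hU : U ∈ unitaryGroup m R) (hV : V ∈ unitaryGroup n R) :
    fromBlocks U 0 0 V ∈ unitaryGroup (m ⊕ n) R := by
  rw [mem_unitaryGroup_iff, star_eq_conjTranspose] at hU hV ⊢
  rw [fromBlocks_conjTranspose, fromBlocks_multiply, hU, hV, ← fromBlocks_one]
  simp

lemma mul_mul_conjTranspose_of_mem_unitaryGroup {m n R : Type*} [Fintype m] [Fintype n]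
    [DecidableEq m] [DecidableEq n] [CommRing R] [StarRing R] {U : Matrix m m R}
    {V : Matrix n n R} (hU : U ∈ unitaryGroup m R) (hV : V ∈ unitaryGroup n R)
    {M : Matrix m n R} {c : R} (hM : M * Mᴴ = c • 1) :
    U * M * V * (U * M * V)ᴴ = c • 1 := by
  rw [mem_unitaryGroup_iff, star_eq_conjTranspose] at hU hV
  calc U * M * V * (U * M * V)ᴴ = U * (M * (V * Vᴴ) * Mᴴ) * Uᴴ := by
        simp only [conjTranspose_mul, Matrix.mul_assoc]
    _ = c • (U * Uᴴ) := by rw [hV, Matrix.mul_one, hM, Matrix.mul_smul, Matrix.mul_one,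
        Matrix.smul_mul]
    _ = c • 1 := by rw [hU]

def blockHTopLeft (a : ℂ) : Matrix (Fin 3) (Fin 3) ℂ :=
  fun i j => if i = 0 then 1 else if j = 0 then 1 else a

def blockHTopRight {p q : ℕ} (x : Fin p → ℂ) (y : Fin q → ℂ) :
    Matrix (Fin 3) (Fin p ⊕ Fin q) ℂ :=
  fun i j => match j with
  | .inl jp => if i = 0 then 1 else x jp
  | .inr jq => if i = 0 then 1 else if i = 1 then y jq else -y jq

def blockHBottomLeft {r s : ℕ} (z : Fin r → ℂ) (w : Fin s → ℂ) :
    Matrix (Fin r ⊕ Fin s) (Fin 3) ℂ :=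
  fun i j => match i with
  | .inl ir => if j = 0 then 1 else z ir
  | .inr i's => if j = 0 then 1 else if j = 1 then w i's else -w i's

section

variable {p q r s : ℕ} (a : ℂ) (x : Fin p → ℂ) (y : Fin q → ℂ) (z : Fin r → ℂ) (w : Fin s → ℂ)
  (A : Fin r → Fin p → ℂ) (B : Fin r → Fin q → ℂ) (C : Fin s → Fin p → ℂ) (D : Fin s → Fin q → ℂ)

lemma blockH_self_eq_fromBlocks :
    blockH a a x y z w A B C D =
      fromBlocks (blockHTopLeft a) (blockHTopRight x y) (blockHBottomLeft z w)
        (fromBlocks A B C D) := by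
  ext (i | i | i) (j | j | j)
  all_goals first
    | rfl
    | (fin_cases i <;> fin_cases j <;> rfl)

lemma mix3_mul_blockHTopLeft_mul_mix3 (α γ : ℂ) :
    mix3 α * blockHTopLeft a * mix3 γ = blockHTopLeft a := by
  ext i j
  fin_cases i <;> fin_cases j <;>
    simp [mix3, blockHTopLeft, mul_apply, Fin.sum_univ_three] <;> ring

lemma mix3_mul_blockHTopRight (α : ℂ) :
    mix3 α * blockHTopRight x y = blockHTopRight x (fun j => α * y j) := by
  ext i (j | j) <;> fin_cases i <;>
    simp [mix3, blockHTopRight, mul_apply, Fin.sum_univ_three] <;> ring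

lemma blockHBottomLeft_mul_mix3 (γ : ℂ) :
    blockHBottomLeft z w * mix3 γ = blockHBottomLeft z (fun i => γ * w i) := by
  ext (i | i) j <;> fin_cases j <;>
    simp [mix3, blockHBottomLeft, mul_apply, Fin.sum_univ_three] <;> ring

lemma fromBlocks_mix3_mul_blockH_mul_fromBlocks_mix3 (α γ : ℂ) :
    fromBlocks (mix3 α) 0 0 (1 : Matrix (Fin r ⊕ Fin s) (Fin r ⊕ Fin s) ℂ) *
        blockH a a x y z w A B C D *
        fromBlocks (mix3 γ) 0 0 (1 : Matrix (Fin p ⊕ Fin q) (Fin p ⊕ Fin q) ℂ)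
      = blockH a a x (fun j => α * y j) z (fun i => γ * w i) A B C D := by
  simp only [blockH_self_eq_fromBlocks, fromBlocks_multiply, Matrix.zero_mul, Matrix.mul_zero,
    Matrix.mul_one, Matrix.one_mul, add_zero, zero_add, mix3_mul_blockHTopLeft_mul_mix3,
    mix3_mul_blockHTopRight, blockHBottomLeft_mul_mix3]

end

lemma norm_blockH_apply {p q r s : ℕ} {a b : ℂ} {x : Fin p → ℂ} {y : Fin q → ℂ}
    {z : Fin r → ℂ} {w : Fin s → ℂ} {A : Fin r → Fin p → ℂ} {B : Fin r → Fin q → ℂ}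
    {C : Fin s → Fin p → ℂ} {D : Fin s → Fin q → ℂ} (ha : ‖a‖ = 1) (hb : ‖b‖ = 1)
    (hx : ∀ i, ‖x i‖ = 1) (hy : ∀ i, ‖y i‖ = 1) (hz : ∀ i, ‖z i‖ = 1) (hw : ∀ i, ‖w i‖ = 1)
    (hA : ∀ i j, ‖A i j‖ = 1) (hB : ∀ i j, ‖B i j‖ = 1)
    (hC : ∀ i j, ‖C i j‖ = 1) (hD : ∀ i j, ‖D i j‖ = 1) (i j) :
    ‖blockH a b x y z w A B C D i j‖ = 1 := by
  rcases i with i | i | i <;> rcases j with j | j | j <;>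
    simp only [blockH] <;> (try split_ifs) <;>
    simp [ha, hb, hx, hy, hz, hw, hA, hB, hC, hD]

theorem blockH_two_param_family_general {p q r s : ℕ}
    (a : ℂ) (x : Fin p → ℂ) (y : Fin q → ℂ) (z : Fin r → ℂ) (w : Fin s → ℂ)
    (A : Fin r → Fin p → ℂ) (B : Fin r → Fin q → ℂ)
    (C : Fin s → Fin p → ℂ) (D : Fin s → Fin q → ℂ)
    (ha : ‖a‖ = 1)
    (hx : ∀ i, ‖x i‖ = 1) (hy : ∀ i, ‖y i‖ = 1)
    (hz : ∀ i, ‖z i‖ = 1) (hw : ∀ i, ‖w i‖ = 1)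
    (hA : ∀ i j, ‖A i j‖ = 1) (hB : ∀ i j, ‖B i j‖ = 1)
    (hC : ∀ i j, ‖C i j‖ = 1) (hD : ∀ i j, ‖D i j‖ = 1)
    (hHad : blockH a a x y z w A B C D *
        (blockH a a x y z w A B C D).conjTranspose = ((3 + p + q : ℕ) : ℂ) • 1)
    (α β : ℂ) (hα : ‖α‖ = 1) (hβ : ‖β‖ = 1) :
    (∀ i j, ‖
        (blockH a a x (fun j => α * y j) z (fun i => α * β * w i) A B C D) i j‖ = 1) ∧
      blockH a a x (fun j => α * y j) z (fun i => α * β * w i) A B C D *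
        (blockH a a x (fun j => α * y j) z (fun i => α * β * w i) A B C D).conjTranspose
          = ((3 + p + q : ℕ) : ℂ) • 1 := by
  have hαβ : ‖α * β‖ = 1 := by rw [norm_mul, hα, hβ, mul_one]
  refine ⟨norm_blockH_apply ha ha hx (by simp [hα, hy]) hz (by simp [hα, hβ, hw]) hA hB hC hD, ?_⟩
  rw [← fromBlocks_mix3_mul_blockH_mul_fromBlocks_mix3]
  exact mul_mul_conjTranspose_of_mem_unitaryGroup
    (fromBlocks_mem_unitaryGroup (mix3_mem_unitaryGroup hα) (one_mem _))
    (fromBlocks_mem_unitaryGroup (mix3_mem_unitaryGroup hαβ) (one_mem _)) hHad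

/-- The two-parameter family in the case `b = a`: replace `y` by `α • y` and `w` by `α β • w`. -/
theorem blockH_two_param_family {p q r s : ℕ} (hn : r + s = p + q)
    (a : ℂ) (x : Fin p → ℂ) (y : Fin q → ℂ) (z : Fin r → ℂ) (w : Fin s → ℂ)
    (A : Fin r → Fin p → ℂ) (B : Fin r → Fin q → ℂ)
    (C : Fin s → Fin p → ℂ) (D : Fin s → Fin q → ℂ)
    (ha : ‖a‖ = 1)
    (hx : ∀ i, ‖x i‖ = 1) (hy : ∀ i, ‖y i‖ = 1)
    (hz : ∀ i, ‖z i‖ = 1) (hw : ∀ i, ‖w i‖ = 1)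
    (hA : ∀ i j, ‖A i j‖ = 1) (hB : ∀ i j, ‖B i j‖ = 1)
    (hC : ∀ i j, ‖C i j‖ = 1) (hD : ∀ i j, ‖D i j‖ = 1)
    (hHad : blockH a a x y z w A B C D *
        (blockH a a x y z w A B C D).conjTranspose = ((3 + p + q : ℕ) : ℂ) • 1)
    (α β : ℂ) (hα : ‖α‖ = 1) (hβ : ‖β‖ = 1) :
    (∀ i j, ‖
        (blockH a a x (fun j => α * y j) z (fun i => α * β * w i) A B C D) i j‖ = 1) ∧
      blockH a a x (fun j => α * y j) z (fun i => α * β * w i) A B C D *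
        (blockH a a x (fun j => α * y j) z (fun i => α * β * w i) A B C D).conjTranspose
          = ((3 + p + q : ℕ) : ℂ) • 1 :=
  blockH_two_param_family_general a x y z w A B C D ha hx hy hz hw hA hB hC hD hHad α β hα hβ
end

section
/- Let H be a complex Hadamard matrix of order n with block structure as in the block-parametrization theorem (rows 1–3 and columns partitioned as 1+1+1+p+q, rows [1,a,b,x,y] and [1,b,a,x,−y] with a, b unimodular and all entries of x, y unimodular). Then the orthogonality of rows 2 and 3 forces 1 + a·conj(b) + b·conj(a) + p − q = 0; in particular Re(a·conj(b)) = (q − p − 1)/2 is a half-integer, and since a·conj(b) is unimodular with 2·Re(a·conj(b)) ∈ ℤ, it follows that a·conj(b) ∈ {1, −1, i, −i, ω, ω², −ω, −ω²} where ω = e^{2πi/3}. -/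
/-!
Orthogonality of the two rows, after `x i * conj (x i) = 1` and `y j * conj (-y j) = -1`,
reads `1 + 2 Re z + p - q = 0` for `z = a * conj b`. So `2 Re z` is an integer in `[-2, 2]`;
since `z` is unimodular it is a root of `z ^ 2 - 2 Re z * z + 1`, and each of the five
possible quadratics splits over the cube roots of unity and `± i`.
-/

open Real Complex ComplexConjugate

lemma Complex.sum_mul_conj_of_norm_eq_one {ι : Type*} [Fintype ι] {f : ι → ℂ}
    (hf : ∀ i, ‖f i‖ = 1) : ∑ i, f i * conj (f i) = Fintype.card ι := by
  simp [mul_conj, normSq_eq_norm_sq, hf]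

lemma Complex.sq_sub_two_mul_re_mul_add_one_of_norm_eq_one {z : ℂ} (hz : ‖z‖ = 1) :
    z ^ 2 - 2 * z.re * z + 1 = 0 := by
  have hunit : z * conj z = 1 := by simp [mul_conj, normSq_eq_norm_sq, hz]
  have hadd : z + conj z = 2 * z.re := by exact_mod_cast add_conj z
  linear_combination z * hadd - hunit

lemma Complex.one_add_exp_two_pi_I_div_three_add_sq :
    1 + exp (2 * π * I / 3) + exp (2 * π * I / 3) ^ 2 = 0 := by
  have h := (isPrimitiveRoot_exp 3 (by norm_num)).geom_sum_eq_zero (by norm_num)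
  simpa [Finset.sum_range_succ] using h

lemma Complex.eq_of_norm_eq_one_of_two_mul_re_eq_int {z : ℂ} (hz : ‖z‖ = 1) {n : ℤ}
    (hn : 2 * z.re = n) :
    z = 1 ∨ z = -1 ∨ z = I ∨ z = -I ∨
     z = exp (2 * π * I / 3) ∨ z = exp (2 * π * I / 3) ^ 2 ∨
     z = -exp (2 * π * I / 3) ∨ z = -exp (2 * π * I / 3) ^ 2 := by
  have hre : |z.re| ≤ 1 := hz ▸ abs_re_le_norm z
  have hlo : -2 ≤ n := by
    have : (-2 : ℝ) ≤ n := by linarith [neg_abs_le z.re]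
    exact_mod_cast this
  have hhi : n ≤ 2 := by
    have : (n : ℝ) ≤ 2 := by linarith [le_abs_self z.re]
    exact_mod_cast this
  have hquad := sq_sub_two_mul_re_mul_add_one_of_norm_eq_one hz
  have hnC : 2 * (z.re : ℂ) = n := by exact_mod_cast hn
  rw [hnC] at hquad
  have hω := one_add_exp_two_pi_I_div_three_add_sq
  set ω := exp (2 * π * I / 3)
  interval_cases n
  · have : (z + 1) * (z + 1) = 0 := by linear_combination hquad
    simp only [mul_self_eq_zero, add_eq_zero_iff_eq_neg] at this
    tauto
  · have : (z - ω) * (z - ω ^ 2) = 0 := by linear_combination hquad + (ω - 1 - z) * hω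
    simp only [mul_eq_zero, sub_eq_zero] at this
    tauto
  · have : (z - I) * (z + I) = 0 := by linear_combination hquad - I_sq
    simp only [mul_eq_zero, sub_eq_zero, add_eq_zero_iff_eq_neg] at this
    tauto
  · have : (z + ω) * (z + ω ^ 2) = 0 := by linear_combination hquad + (z + ω - 1) * hω
    simp only [mul_eq_zero, add_eq_zero_iff_eq_neg] at this
    tauto
  · have : (z - 1) * (z - 1) = 0 := by linear_combination hquad
    simp only [mul_self_eq_zero, sub_eq_zero] at this
    tauto

/-- Orthogonality of the rows `(1,a,b,x,y)` and `(1,b,a,x,-y)` forces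
`1 + a·conj b + b·conj a + p - q = 0`, and hence `a·conj b` is one of the eight listed
roots of unity. -/
theorem ab_restriction {p q : ℕ} (a b : ℂ) (x : Fin p → ℂ) (y : Fin q → ℂ)
    (ha : ‖a‖ = 1) (hb : ‖b‖ = 1)
    (hx : ∀ i, ‖x i‖ = 1) (hy : ∀ j, ‖y j‖ = 1)
    (horth : 1 + a * conj b + b * conj a
        + (∑ i, x i * conj (x i)) + (∑ j, y j * conj (-(y j))) = 0) :
    1 + a * conj b + b * conj a + (p : ℂ) - (q : ℂ) = 0 ∧
    (a * conj b = 1 ∨ a * conj b = -1 ∨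
     a * conj b = Complex.I ∨ a * conj b = -Complex.I ∨
     a * conj b = Complex.exp (2 * Real.pi * Complex.I / 3) ∨
     a * conj b = Complex.exp (2 * Real.pi * Complex.I / 3) ^ 2 ∨
     a * conj b = -Complex.exp (2 * Real.pi * Complex.I / 3) ∨
     a * conj b = -Complex.exp (2 * Real.pi * Complex.I / 3) ^ 2) := by
  simp only [map_neg, mul_neg, Finset.sum_neg_distrib, sum_mul_conj_of_norm_eq_one hx,
    sum_mul_conj_of_norm_eq_one hy, Fintype.card_fin] at horth
  have hrow : 1 + a * conj b + b * conj a + (p : ℂ) - (q : ℂ) = 0 := by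
    linear_combination horth
  refine ⟨hrow, eq_of_norm_eq_one_of_two_mul_re_eq_int (n := q - p - 1) ?_ ?_⟩
  · simp [ha, hb]
  · have hconj : b * conj a = conj (a * conj b) := by simp [mul_comm]
    have := congrArg re (hconj ▸ hrow)
    simp only [add_re, sub_re, one_re, conj_re, natCast_re, zero_re] at this
    push_cast
    linarith
end

section
/- The 10×10 matrix D₁₀(a,b,c) defined below is a complex Hadamard matrix for all unimodular complex numbers a, b, c: its rows are r₀ = (1,1,1,1,1,1,1,1,1,1); r₁ = (1, −1, −i·a·conj(b), −i·a, −i·conj(c), −i, i·conj(c), i·a, i·a·conj(b), i); r₂ = (1, −i·b·conj(a), −1, i·b, i·conj(c), −i, −i·conj(c), −i·b, i, i·b·conj(a)); r₃ = (1, −i·conj(a), i·conj(b), −1, −i, i, −i, i, −i·conj(b), i·conj(a)); r₄ = (1, −i·c, i·c, −i, −1, i, i, −i, i·c, −i·c); r₅ = (1, −i, −i, i, i, −1, i, i, −i, −i); r₆ = (1, i·c, −i·c, −i, i, i, −1, −i, −i·c, i·c); r₇ = (1, i·conj(a), −i·conj(b), i, −i, i, −i, −1, i·conj(b), −i·conj(a));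 r₈ = (1, i·b·conj(a), i, −i·b, i·conj(c), −i, −i·conj(c), i·b, −1, −i·b·conj(a)); r₉ = (1, i, i·a·conj(b), i·a, −i·conj(c), −i, i·conj(c), −i·a, −i·a·conj(b), −1). -/
open Matrix Complex ComplexConjugate

/-- The three-parameter family `D₁₀⁽³⁾(a,b,c)`. -/
noncomputable def D10 (a b c : ℂ) : Matrix (Fin 10) (Fin 10) ℂ :=
  !![1, 1, 1, 1, 1, 1, 1, 1, 1, 1;
     1, -1, -I*a*conj b, -I*a, -I*conj c, -I, I*conj c, I*a, I*a*conj b, I;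
     1, -I*b*conj a, -1, I*b, I*conj c, -I, -I*conj c, -I*b, I, I*b*conj a;
     1, -I*conj a, I*conj b, -1, -I, I, -I, I, -I*conj b, I*conj a;
     1, -I*c, I*c, -I, -1, I, I, -I, I*c, -I*c;
     1, -I, -I, I, I, -1, I, I, -I, -I;
     1, I*c, -I*c, -I, I, I, -1, -I, -I*c, I*c;
     1, I*conj a, -I*conj b, I, -I, I, -I, -1, I*conj b, -I*conj a;
     1, I*b*conj a, I, -I*b, I*conj c, -I, -I*conj c, I*b, -1, -I*b*conj a;
     1, I, I*a*conj b, I*a, -I*conj c, -I, I*conj c, -I*a, -I*a*conj b, -1]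

/-!
Every entry of `D10 a b c` is `±1` or `±i` times a product of `a`, `b`, `c` and their conjugates,
so it is unimodular. The Gram matrix `H Hᴴ` is Hermitian with diagonal entries `∑ₖ |Hᵢₖ|² = 10`,
so it remains to check the 45 pairs of rows `i < j`; each inner product vanishes identically
modulo the relations `a ā = b b̄ = c c̄ = 1` and `i² = -1`.
-/

theorem isCHM_of_norm_eq_one_of_orthogonal {n : ℕ} {H : Matrix (Fin n) (Fin n) ℂ}
    (hnorm : ∀ i j, ‖H i j‖ = 1)
    (horth : ∀ i j, i < j → ∑ k, H i k * conj (H j k) = 0) : IsCHM H := by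
  refine ⟨hnorm, ?_⟩
  ext i j
  simp only [mul_apply, conjTranspose_apply, Matrix.smul_apply, one_apply, smul_eq_mul,
    RCLike.star_def]
  rcases lt_trichotomy i j with hij | rfl | hji
  · simp [hij.ne, horth i j hij]
  · simp [mul_conj', hnorm]
  · simpa [hji.ne', mul_comm] using congrArg conj (horth j i hji)

section D10

variable {a b c : ℂ}

theorem norm_D10_apply (ha : ‖a‖ = 1) (hb : ‖b‖ = 1) (hc : ‖c‖ = 1) (i j : Fin 10) :
    ‖D10 a b c i j‖ = 1 := by
  fin_cases i <;> fin_cases j <;> simp [D10, ha, hb, hc]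

set_option maxHeartbeats 1000000 in
theorem D10_rows_orthogonal (ha : ‖a‖ = 1) (hb : ‖b‖ = 1) (hc : ‖c‖ = 1)
    (i j : Fin 10) (hij : i < j) : ∑ k, D10 a b c i k * conj (D10 a b c j k) = 0 := by
  replace ha : a * conj a = 1 := by simp [mul_conj', ha]
  replace hb : b * conj b = 1 := by simp [mul_conj', hb]
  replace hc : c * conj c = 1 := by simp [mul_conj', hc]
  have hI : I * I = -1 := I_mul_I
  fin_cases i <;> fin_cases j <;> simp [Fin.sum_univ_succ, D10] at hij ⊢ <;> grind

end D10

theorem D10_isCHM (a b c : ℂ)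
    (ha : ‖a‖ = 1) (hb : ‖b‖ = 1) (hc : ‖c‖ = 1) :
    IsCHM (D10 a b c) :=
  isCHM_of_norm_eq_one_of_orthogonal (norm_D10_apply ha hb hc) (D10_rows_orthogonal ha hb hc)
end

section
/- Setting all parameters to 1 in D₁₀, the resulting matrix D₁₀(1,1,1) is a Butson-type Hadamard matrix BH(4,10): all its entries are fourth roots of unity and D₁₀(1,1,1)·D₁₀(1,1,1)ᴴ = 10·I. -/
open Matrix Complex ComplexConjugate

/-!
`D₁₀(1,1,1) = Δ (1 + i C) Δ`, where `Δ = diag(1, -i, …, -i)` and `C` is a symmetric conference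
matrix of order 10 (zero diagonal, `±1` off it, `C² = 9`). Since `C` is real symmetric,
`(1 + i C)(1 + i C)ᴴ = (1 + i C)(1 - i C) = 1 + C² = 10`, and conjugating by the unimodular
diagonal `Δ` keeps both this identity and the fourth-root-of-unity entries.
-/

def IsButsonHadamard {n : ℕ} (q : ℕ) (H : Matrix (Fin n) (Fin n) ℂ) : Prop :=
  (∀ i j, H i j ^ q = 1) ∧ IsCHM H

theorem neg_I_pow_four : (-I) ^ 4 = 1 := by
  rw [neg_pow, I_pow_four]
  norm_num

namespace Matrix

structure IsSymmConference {n : ℕ} (C : Matrix (Fin n) (Fin n) ℤ) : Prop where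
  isSymm : C.IsSymm
  diag_eq_zero : ∀ i, C i i = 0
  eq_one_or_neg_one : ∀ i j, i ≠ j → C i j = 1 ∨ C i j = -1
  mul_self : C * C = ((n : ℤ) - 1) • 1

theorem one_add_I_smul_mul_conjTranspose {ι : Type*} [Fintype ι] [DecidableEq ι]
    {A : Matrix ι ι ℂ} (hA : A.IsHermitian) : (1 + I • A) * (1 + I • A)ᴴ = 1 + A * A := by
  have hconj : (1 + I • A)ᴴ = 1 - I • A := by
    rw [conjTranspose_add, conjTranspose_smul, hA.eq, conjTranspose_one, star_def, conj_I,
      neg_smul, sub_eq_add_neg]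
  calc (1 + I • A) * (1 + I • A)ᴴ = 1 * 1 - (I • A) * (I • A) := by
        rw [hconj, (Commute.one_left _).mul_self_sub_mul_self_eq]
    _ = 1 + A * A := by
        rw [smul_mul_smul_comm, I_mul_I, neg_smul, one_smul, Matrix.one_mul, sub_neg_eq_add]

theorem IsSymmConference.isButsonHadamard_one_add_I_smul {n : ℕ} {C : Matrix (Fin n) (Fin n) ℤ}
    (hC : C.IsSymmConference) : IsButsonHadamard 4 (1 + I • C.map ((↑) : ℤ → ℂ)) := by
  have pow_four (i j : Fin n) : ((1 + I • C.map ((↑) : ℤ → ℂ)) i j) ^ 4 = 1 := by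
    rcases eq_or_ne i j with rfl | hij
    · simp [hC.diag_eq_zero]
    · rcases hC.eq_one_or_neg_one i j hij with h | h <;> simp [hij, h, neg_I_pow_four]
  have hermitian : (C.map ((↑) : ℤ → ℂ)).IsHermitian :=
    (isHermitian_iff_isSymm.2 hC.isSymm).map _ fun z => by simp
  have mul_self : C.map ((↑) : ℤ → ℂ) * C.map (↑) = ((n : ℂ) - 1) • 1 := by
    have hmap := Matrix.map_mul (L := C) (M := C) (f := Int.castRingHom ℂ)
    rw [Int.coe_castRingHom] at hmap
    rw [← hmap, hC.mul_self]
    ext i j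
    by_cases hij : i = j <;> simp [natCast_apply, hij]
  refine ⟨pow_four, fun i j => norm_eq_one_of_pow_eq_one (pow_four i j) four_ne_zero, ?_⟩
  rw [one_add_I_smul_mul_conjTranspose hermitian, mul_self]
  module

theorem diagonal_mul_conjTranspose_self {ι : Type*} [Fintype ι] [DecidableEq ι] {d : ι → ℂ}
    (hd : ∀ i, ‖d i‖ = 1) : diagonal d * (diagonal d)ᴴ = 1 := by
  rw [diagonal_conjTranspose, diagonal_mul_diagonal, ← diagonal_one]
  congr 1
  ext i
  simp [mul_conj, normSq_eq_norm_sq, hd i]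

end Matrix

theorem IsCHM.diagonal_mul_mul_diagonal {n : ℕ} {H : Matrix (Fin n) (Fin n) ℂ} (hH : IsCHM H)
    {d e : Fin n → ℂ} (hd : ∀ i, ‖d i‖ = 1) (he : ∀ i, ‖e i‖ = 1) :
    IsCHM (diagonal d * H * diagonal e) := by
  refine ⟨fun i j => ?_, ?_⟩
  · simp [mul_diagonal, diagonal_mul, hd i, he j, hH.1 i j]
  · calc diagonal d * H * diagonal e * (diagonal d * H * diagonal e)ᴴ
        = diagonal d * H * (diagonal e * (diagonal e)ᴴ) * Hᴴ * (diagonal d)ᴴ := by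
          simp only [conjTranspose_mul, Matrix.mul_assoc]
      _ = diagonal d * (H * Hᴴ) * (diagonal d)ᴴ := by
          simp only [diagonal_mul_conjTranspose_self he, Matrix.mul_one, Matrix.mul_assoc]
      _ = (n : ℂ) • 1 := by
          rw [hH.2, Matrix.mul_smul, Matrix.mul_one, Matrix.smul_mul,
            diagonal_mul_conjTranspose_self hd]

theorem IsButsonHadamard.diagonal_mul_mul_diagonal {n q : ℕ} (hq : q ≠ 0)
    {H : Matrix (Fin n) (Fin n) ℂ} (hH : IsButsonHadamard q H)
    {d e : Fin n → ℂ} (hd : ∀ i, d i ^ q = 1) (he : ∀ i, e i ^ q = 1) :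
    IsButsonHadamard q (diagonal d * H * diagonal e) := by
  refine ⟨fun i j => ?_, hH.2.diagonal_mul_mul_diagonal
    (fun i => norm_eq_one_of_pow_eq_one (hd i) hq) (fun i => norm_eq_one_of_pow_eq_one (he i) hq)⟩
  simp [mul_diagonal, diagonal_mul, mul_pow, hd i, he j, hH.1 i j]

-- The Seidel matrix of the Paley graph on 9 vertices, bordered by a row and a column of ones.
def conference10 : Matrix (Fin 10) (Fin 10) ℤ :=
  !![0, 1, 1, 1, 1, 1, 1, 1, 1, 1;
     1, 0, 1, 1, 1, 1, -1, -1, -1, -1;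
     1, 1, 0, -1, -1, 1, 1, 1, -1, -1;
     1, 1, -1, 0, 1, -1, 1, -1, 1, -1;
     1, 1, -1, 1, 0, -1, -1, 1, -1, 1;
     1, 1, 1, -1, -1, 0, -1, -1, 1, 1;
     1, -1, 1, 1, -1, -1, 0, 1, 1, -1;
     1, -1, 1, -1, 1, -1, 1, 0, -1, 1;
     1, -1, -1, 1, -1, 1, 1, -1, 0, 1;
     1, -1, -1, -1, 1, 1, -1, 1, 1, 0]

theorem isSymmConference_conference10 : conference10.IsSymmConference where
  isSymm := by decide
  diag_eq_zero := by decide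
  eq_one_or_neg_one i := by fin_cases i <;> decide
  mul_self := by decide

theorem D10_one_one_one_eq : D10 1 1 1 =
    diagonal (fun i => if i = 0 then 1 else -I) * (1 + I • conference10.map (↑)) *
      diagonal (fun i => if i = 0 then 1 else -I) := by
  ext i j
  fin_cases i <;> fin_cases j <;> simp [D10, conference10, diagonal_mul, mul_diagonal, one_apply]

/-- `D₁₀(1,1,1)` is a Butson-type Hadamard matrix `BH(4,10)`: all entries are fourth
roots of unity and it is complex Hadamard. -/
theorem D10_one_is_BH4_10 :
    (∀ i j, (D10 1 1 1) i j ^ 4 = 1) ∧ IsCHM (D10 1 1 1) := by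
  have phase_pow_four (i : Fin 10) : (if i = 0 then (1 : ℂ) else -I) ^ 4 = 1 := by
    split_ifs
    · exact one_pow 4
    · exact neg_I_pow_four
  rw [D10_one_one_one_eq]
  exact isSymmConference_conference10.isButsonHadamard_one_add_I_smul.diagonal_mul_mul_diagonal
    four_ne_zero phase_pow_four phase_pow_four
end

section
/- The specific 14×14 matrix L₁₄ over {1, −1, i, −i} given by the explicit entry table below satisfies L₁₄·L₁₄ᴴ = 14·I; hence BH(4,14) matrices exist. Rows (comma-separated, with i the imaginary unit): (1,1,1,1,1,1,1,1,1,1,1,1,1,1); (1,1,1,−1,−1,1,−i,−1,−1,i,−i,−1,i,1); (1,1,i,i,i,−i,1,−i,−1,−i,−1,1,−1,−1); (1,1,i,−i,−i,−i,−1,i,i,−1,1,i,−i,−1); (1,1,−i,1,−1,i,−1,−i,1,1,i,−1,−1,−1); (1,i,−1,−i,−1,−1,−i,i,1,−i,−1,1,i,1); (1,i,−i,i,1,−1,−1,−i,−i,−1,−i,i,1,i); (1,−1,1,1,−1,i,i,i,−1,−i,−i,−i,1,−1); (1,−1,1,−i,i,−1,1,−1,−i,i,i,i,−i,−i); (1,−1,i,−1,1,1,−1,−1,1,1,−1,−i,−i,i);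 (1,−1,−1,1,i,−i,−1,1,−1,i,1,−i,−1,1); (1,−1,−i,−1,−i,1,i,−i,i,−1,i,1,i,−i); (1,−i,−1,i,1,i,1,i,1,−1,−i,−1,−1,−i); (1,−i,−1,−1,−i,−1,1,1,−1,1,i,−1,1,i). -/
/-!
All entries of `L₁₄` lie in `ℤ[i]`, so `L₁₄ L₁₄ᴴ = 14 I` is the image, under the star ring
embedding `ℤ[i] → ℂ`, of the same identity over `ℤ[i]`, where equality is decidable and the
identity is checked by evaluation.
-/

open Matrix Complex

/-- The isolated matrix `L₁₄A⁽⁰⁾`, a `BH(4,14)` matrix. -/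
noncomputable def L14 : Matrix (Fin 14) (Fin 14) ℂ :=
  !![1, 1, 1, 1, 1, 1, 1, 1, 1, 1, 1, 1, 1, 1;
     1, 1, 1, -1, -1, 1, -I, -1, -1, I, -I, -1, I, 1;
     1, 1, I, I, I, -I, 1, -I, -1, -I, -1, 1, -1, -1;
     1, 1, I, -I, -I, -I, -1, I, I, -1, 1, I, -I, -1;
     1, 1, -I, 1, -1, I, -1, -I, 1, 1, I, -1, -1, -1;
     1, I, -1, -I, -1, -1, -I, I, 1, -I, -1, 1, I, 1;
     1, I, -I, I, 1, -1, -1, -I, -I, -1, -I, I, 1, I;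
     1, -1, 1, 1, -1, I, I, I, -1, -I, -I, -I, 1, -1;
     1, -1, 1, -I, I, -1, 1, -1, -I, I, I, I, -I, -I;
     1, -1, I, -1, 1, 1, -1, -1, 1, 1, -1, -I, -I, I;
     1, -1, -1, 1, I, -I, -1, 1, -1, I, 1, -I, -1, 1;
     1, -1, -I, -1, -I, 1, I, -I, I, -1, I, 1, I, -I;
     1, -I, -1, I, 1, I, 1, I, 1, -1, -I, -1, -1, -I;
     1, -I, -1, -1, -I, -1, 1, 1, -1, 1, I, -1, 1, I]

namespace Matrix

variable {m n α β : Type*}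

theorem comp_vecCons {k : ℕ} (f : α → β) (a : α) (v : Fin k → α) :
    f ∘ vecCons a v = vecCons (f a) (f ∘ v) :=
  funext (Fin.cases rfl fun _ => rfl)

theorem comp_vecEmpty (f : α → β) : f ∘ (![] : Fin 0 → α) = ![] :=
  funext fun i => i.elim0

theorem map_of (A : m → n → α) (f : α → β) : (of A).map f = of ((f ∘ ·) ∘ A) :=
  rfl

theorem map_mul_conjTranspose_map_eq_smul [Fintype n] [DecidableEq n] [CommSemiring α]
    [StarRing α] [CommSemiring β] [StarRing β] (f : α →+* β) (hf : ∀ x, f (star x) = star (f x))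
    {A : Matrix n n α} {c : α} (hA : A * Aᴴ = c • 1) :
    A.map f * (A.map f)ᴴ = f c • 1 := by
  rw [← conjTranspose_map f hf, ← Matrix.map_mul, hA, map_smul' f c 1 (map_mul f),
    Matrix.map_one f (map_zero f) (map_one f)]

end Matrix

theorem pow_four_eq_one_of_sq_eq_neg_one {R : Type*} [CommRing R] {i x : R} (hi : i ^ 2 = -1)
    (hx : x = 1 ∨ x = -1 ∨ x = i ∨ x = -i) : x ^ 4 = 1 := by
  rcases hx with h | h | h | h <;> rw [h]
  · norm_num
  · norm_num
  · linear_combination (i ^ 2 - 1) * hi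
  · linear_combination (i ^ 2 - 1) * hi

local notation "𝐢" => (Zsqrtd.sqrtd : GaussianInt)

def L14Gaussian : Matrix (Fin 14) (Fin 14) GaussianInt :=
  !![1, 1, 1, 1, 1, 1, 1, 1, 1, 1, 1, 1, 1, 1;
     1, 1, 1, -1, -1, 1, -𝐢, -1, -1, 𝐢, -𝐢, -1, 𝐢, 1;
     1, 1, 𝐢, 𝐢, 𝐢, -𝐢, 1, -𝐢, -1, -𝐢, -1, 1, -1, -1;
     1, 1, 𝐢, -𝐢, -𝐢, -𝐢, -1, 𝐢, 𝐢, -1, 1, 𝐢, -𝐢, -1;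
     1, 1, -𝐢, 1, -1, 𝐢, -1, -𝐢, 1, 1, 𝐢, -1, -1, -1;
     1, 𝐢, -1, -𝐢, -1, -1, -𝐢, 𝐢, 1, -𝐢, -1, 1, 𝐢, 1;
     1, 𝐢, -𝐢, 𝐢, 1, -1, -1, -𝐢, -𝐢, -1, -𝐢, 𝐢, 1, 𝐢;
     1, -1, 1, 1, -1, 𝐢, 𝐢, 𝐢, -1, -𝐢, -𝐢, -𝐢, 1, -1;
     1, -1, 1, -𝐢, 𝐢, -1, 1, -1, -𝐢, 𝐢, 𝐢, 𝐢, -𝐢, -𝐢;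
     1, -1, 𝐢, -1, 1, 1, -1, -1, 1, 1, -1, -𝐢, -𝐢, 𝐢;
     1, -1, -1, 1, 𝐢, -𝐢, -1, 1, -1, 𝐢, 1, -𝐢, -1, 1;
     1, -1, -𝐢, -1, -𝐢, 1, 𝐢, -𝐢, 𝐢, -1, 𝐢, 1, 𝐢, -𝐢;
     1, -𝐢, -1, 𝐢, 1, 𝐢, 1, 𝐢, 1, -1, -𝐢, -1, -1, -𝐢;
     1, -𝐢, -1, -1, -𝐢, -1, 1, 1, -1, 1, 𝐢, -1, 1, 𝐢]

-- Instance synthesis fails for the decidability of `∀ i j, …`, hence one `decide` per row.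
theorem L14Gaussian_entries (i : Fin 14) :
    ∀ j, L14Gaussian i j = 1 ∨ L14Gaussian i j = -1 ∨
      L14Gaussian i j = 𝐢 ∨ L14Gaussian i j = -𝐢 := by
  fin_cases i <;> decide

theorem L14Gaussian_mul_conjTranspose :
    L14Gaussian * L14Gaussianᴴ = (14 : GaussianInt) • 1 := by
  decide

theorem GaussianInt.toComplex_sqrtd : GaussianInt.toComplex 𝐢 = I := by
  simp [GaussianInt.toComplex_def]

theorem L14_eq_map_L14Gaussian : L14 = L14Gaussian.map GaussianInt.toComplex := by
  rw [L14, L14Gaussian, Matrix.map_of]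
  simp only [Matrix.comp_vecCons, Matrix.comp_vecEmpty, map_one, map_neg,
    GaussianInt.toComplex_sqrtd]

theorem L14_entries (i j : Fin 14) :
    L14 i j = 1 ∨ L14 i j = -1 ∨ L14 i j = I ∨ L14 i j = -I := by
  rw [L14_eq_map_L14Gaussian, Matrix.map_apply]
  rcases L14Gaussian_entries i j with h | h | h | h <;> simp [h, GaussianInt.toComplex_sqrtd]

theorem L14_mul_conjTranspose : L14 * L14ᴴ = (14 : ℂ) • 1 := by
  rw [L14_eq_map_L14Gaussian, Matrix.map_mul_conjTranspose_map_eq_smul _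
    GaussianInt.toComplex_star L14Gaussian_mul_conjTranspose, map_ofNat]

/-- `L₁₄` has all entries in `{1, -1, i, -i}` and satisfies `L·Lᴴ = 14·I`;
hence `BH(4,14)` matrices exist. -/
theorem L14_is_BH4_14 :
    ((∀ i j, L14 i j = 1 ∨ L14 i j = -1 ∨ L14 i j = I ∨ L14 i j = -I) ∧
      L14 * L14.conjTranspose = (14 : ℂ) • 1) ∧
    ∃ H : Matrix (Fin 14) (Fin 14) ℂ,
      (∀ i j, H i j ^ 4 = 1) ∧ H * H.conjTranspose = (14 : ℂ) • 1 :=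
  ⟨⟨L14_entries, L14_mul_conjTranspose⟩, L14,
    fun i j => pow_four_eq_one_of_sq_eq_neg_one I_sq (L14_entries i j), L14_mul_conjTranspose⟩
end

section
/- Diţă doubling: if K is a complex Hadamard matrix of order m and L is a complex Hadamard matrix of order m, and E = diag(e₁,…,e_m) is a diagonal matrix with unimodular entries, then the 2m×2m block matrix [[K, E·L], [K, −E·L]] is a complex Hadamard matrix of order 2m. -/
open Matrix Complex

/-!
The block matrix `[[K, M], [K, -M]]` has Gram matrix `[[KKᴴ + MMᴴ, KKᴴ - MMᴴ], [KKᴴ - MMᴴ, KKᴴ + MMᴴ]]`,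
so it is Hadamard of order `2m` as soon as `K` and `M` are Hadamard of order `m`; and `M = E L` is
Hadamard because the unimodular diagonal `E` is unitary.
-/

namespace Matrix

variable {ι R : Type*} [Fintype ι]

theorem fromBlocks_neg_mul_conjTranspose [Ring R] [StarRing R] (K M : Matrix ι ι R) :
    fromBlocks K M K (-M) * (fromBlocks K M K (-M))ᴴ =
      fromBlocks (K * Kᴴ + M * Mᴴ) (K * Kᴴ - M * Mᴴ) (K * Kᴴ - M * Mᴴ) (K * Kᴴ + M * Mᴴ) := by
  simp only [fromBlocks_conjTranspose, fromBlocks_multiply, conjTranspose_neg, mul_neg, neg_mul,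
    neg_neg, sub_eq_add_neg]

theorem fromBlocks_neg_mul_conjTranspose_of_eq_smul_one [DecidableEq ι] [CommRing R] [StarRing R]
    {K M : Matrix ι ι R} {c : R} (hK : K * Kᴴ = c • 1) (hM : M * Mᴴ = c • 1) :
    fromBlocks K M K (-M) * (fromBlocks K M K (-M))ᴴ = (2 * c) • 1 := by
  rw [fromBlocks_neg_mul_conjTranspose, hK, hM, sub_self, ← fromBlocks_one, fromBlocks_smul,
    smul_zero, two_mul, add_smul]

theorem diagonal_mul_conjTranspose_diagonal_of_norm_eq_one {e : ι → ℂ} [DecidableEq ι]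
    (he : ∀ i, ‖e i‖ = 1) : diagonal e * (diagonal e)ᴴ = 1 := by
  rw [diagonal_conjTranspose, diagonal_mul_diagonal, ← diagonal_one]
  congr 1
  ext i
  rw [Pi.star_apply, Complex.star_def, mul_conj', he]
  norm_num

end Matrix

theorem IsCHM.diagonal_mul {n : ℕ} {L : Matrix (Fin n) (Fin n) ℂ} (hL : IsCHM L) {e : Fin n → ℂ}
    (he : ∀ i, ‖e i‖ = 1) : IsCHM (diagonal e * L) := by
  refine ⟨fun i j => by simp [he, hL.1], ?_⟩
  calc diagonal e * L * (diagonal e * L)ᴴ = diagonal e * (L * Lᴴ) * (diagonal e)ᴴ := by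
        simp only [conjTranspose_mul, Matrix.mul_assoc]
    _ = (n : ℂ) • 1 := by
        rw [hL.2, Matrix.mul_smul, Matrix.mul_one, Matrix.smul_mul,
          diagonal_mul_conjTranspose_diagonal_of_norm_eq_one he]

/-- Diţă doubling: `[[K, E·L], [K, -E·L]]` is a complex Hadamard matrix of order `2m`. -/
theorem dita_doubling {m : ℕ} (K L : Matrix (Fin m) (Fin m) ℂ) (e : Fin m → ℂ)
    (hK : IsCHM K) (hL : IsCHM L) (he : ∀ i, ‖e i‖ = 1) :
    (∀ i j, ‖
        ((Matrix.fromBlocks K (Matrix.diagonal e * L) K (-(Matrix.diagonal e * L))) i j)‖ = 1) ∧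
      Matrix.fromBlocks K (Matrix.diagonal e * L) K (-(Matrix.diagonal e * L)) *
        (Matrix.fromBlocks K (Matrix.diagonal e * L) K
          (-(Matrix.diagonal e * L))).conjTranspose = ((2 * m : ℕ) : ℂ) • 1 := by
  have hEL := hL.diagonal_mul he
  refine ⟨?_, ?_⟩
  · rintro (i | i) (j | j) <;>
      simp only [fromBlocks_apply₁₁, fromBlocks_apply₁₂, fromBlocks_apply₂₁, fromBlocks_apply₂₂,
        Matrix.neg_apply, norm_neg, hK.1, hEL.1]
  · rw [fromBlocks_neg_mul_conjTranspose_of_eq_smul_one hK.2 hEL.2, Nat.cast_mul, Nat.cast_ofNat]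
end

section
/- Let H(α) = H ∘ EXP(iR·t) be a smooth one-parameter family of complex Hadamard matrices through H = H(0), where R is a fixed real n×n matrix and t ∈ ℝ small. Then R satisfies the linear system Σ_{k=1}^n H_{i,k}·conj(H_{j,k})·(R_{i,k} − R_{j,k}) = 0 for all 1 ≤ i < j ≤ n. -/
open Matrix Complex ComplexConjugate

/-!
Rows `i ≠ j` of `H ∘ EXP(i t R)` are orthogonal for all small `t`, so the exponential sum
`t ↦ ∑ₖ H_{i,k} conj(H_{j,k}) exp(i t (R_{i,k} − R_{j,k}))` vanishes near `0`; its derivative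
at `0`, which is `i` times the defect sum, therefore vanishes too.
-/

open Filter Topology

theorem hasDerivAt_sum_mul_cexp_zero {ι : Type*} (s : Finset ι) (c d : ι → ℂ) :
    HasDerivAt (fun t : ℝ => ∑ k ∈ s, c k * cexp (I * t * d k))
      (I * ∑ k ∈ s, c k * d k) 0 := by
  have hterm : ∀ k ∈ s, HasDerivAt (fun t : ℝ => c k * cexp (I * t * d k))
      (c k * d k * I) 0 := by
    intro k _
    have hlin : HasDerivAt (fun z : ℂ => I * z * d k) (I * d k) ((0 : ℝ) : ℂ) := by
      simpa using ((hasDerivAt_id _).const_mul I).mul_const (d k)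
    simpa [mul_comm, mul_left_comm] using (hlin.cexp.const_mul (c k)).comp_ofReal
  rw [mul_comm, Finset.sum_mul]
  exact HasDerivAt.fun_sum hterm

theorem sum_mul_eq_zero_of_sum_mul_cexp_eventuallyEq_zero {ι : Type*} {s : Finset ι}
    {c d : ι → ℂ} (h : (fun t : ℝ => ∑ k ∈ s, c k * cexp (I * t * d k)) =ᶠ[𝓝 0] 0) :
    ∑ k ∈ s, c k * d k = 0 := by
  have hzero : HasDerivAt (fun t : ℝ => ∑ k ∈ s, c k * cexp (I * t * d k)) 0 0 :=
    (hasDerivAt_const (0 : ℝ) (0 : ℂ)).congr_of_eventuallyEq h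
  have hI : I * ∑ k ∈ s, c k * d k = 0 := (hasDerivAt_sum_mul_cexp_zero s c d).unique hzero
  exact (mul_eq_zero.mp hI).resolve_left I_ne_zero

section PhaseDeform

variable {m n : Type*}

noncomputable def phaseDeform (H : Matrix m n ℂ) (R : Matrix m n ℝ) (t : ℝ) : Matrix m n ℂ :=
  fun a b => H a b * cexp (I * t * R a b)

theorem phaseDeform_mul_conjTranspose_apply [Fintype n] (H : Matrix m n ℂ) (R : Matrix m n ℝ)
    (t : ℝ) (i j : m) :
    (phaseDeform H R t * (phaseDeform H R t)ᴴ) i j =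
      ∑ k, H i k * conj (H j k) * cexp (I * t * ((R i k : ℂ) - R j k)) := by
  simp only [mul_apply, conjTranspose_apply, phaseDeform, star_mul', star_def,
    ← exp_conj, map_mul, conj_I, conj_ofReal]
  refine Finset.sum_congr rfl fun k _ => ?_
  rw [mul_mul_mul_comm, ← Complex.exp_add]
  ring_nf

end PhaseDeform

theorem IsCHM.mul_conjTranspose_apply_of_ne {n : ℕ} {H : Matrix (Fin n) (Fin n) ℂ}
    (hH : IsCHM H) {i j : Fin n} (hij : i ≠ j) : (H * Hᴴ) i j = 0 := by
  rw [hH.2, Matrix.smul_apply, one_apply_ne hij, smul_zero]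

theorem defect_linear_system_general {n : ℕ} (H : Matrix (Fin n) (Fin n) ℂ)
    (R : Matrix (Fin n) (Fin n) ℝ) (ε : ℝ) (hε : 0 < ε)
    (hfam : ∀ t : ℝ, |t| < ε →
      IsCHM (fun a b => H a b * Complex.exp (Complex.I * (t : ℂ) * (R a b : ℂ)))) :
    ∀ i j : Fin n, i < j →
      ∑ k, H i k * conj (H j k) * (((R i k : ℝ) : ℂ) - ((R j k : ℝ) : ℂ)) = 0 := by
  intro i j hij
  apply sum_mul_eq_zero_of_sum_mul_cexp_eventuallyEq_zero
  filter_upwards [Metric.ball_mem_nhds (0 : ℝ) hε] with t ht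
  have hK : IsCHM (phaseDeform H R t) := hfam t (by simpa using ht)
  rw [← phaseDeform_mul_conjTranspose_apply]
  exact hK.mul_conjTranspose_apply_of_ne hij.ne

/-- If `t ↦ H ∘ EXP(i·t·R)` is a family of complex Hadamard matrices for all `t` in a
neighbourhood of `0`, then `R` satisfies the defect linear system
`∑ₖ H_{i,k}·conj(H_{j,k})·(R_{i,k} − R_{j,k}) = 0` for all `i < j`. -/
theorem defect_linear_system {n : ℕ} (H : Matrix (Fin n) (Fin n) ℂ) (hH : IsCHM H)
    (R : Matrix (Fin n) (Fin n) ℝ) (ε : ℝ) (hε : 0 < ε)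
    (hfam : ∀ t : ℝ, |t| < ε →
      IsCHM (fun a b => H a b * Complex.exp (Complex.I * (t : ℂ) * (R a b : ℂ)))) :
    ∀ i j : Fin n, i < j →
      ∑ k, H i k * conj (H j k) * (((R i k : ℝ) : ℂ) - ((R j k : ℝ) : ℂ)) = 0 :=
  defect_linear_system_general H R ε hε hfam
end

section
/- If a complex Hadamard matrix H of order n has defect zero—i.e., the real solution space of the system Σ_{k=1}^n H_{i,k}·conj(H_{j,k})·(R_{i,k} − R_{j,k}) = 0 (over all 1 ≤ i < j ≤ n) has dimension exactly 2n − 1—then every smooth one-parameter family t ↦ H ∘ EXP(i·t·R) of complex Hadamard matrices through H has R in the span of the trivial solutions R_{a,b} = rₐ + cᵦ (row and column constants); i.e., the family is obtained from H by multiplication with unitary diagonal matrices only. -/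
/-!
Differentiating at `t = 0` the orthogonality of rows `i ≠ j` of `H ∘ EXP(i·t·R)` yields exactly
the defect equation for the pair `(i, j)`. Defect zero then makes `R` trivial, and a trivial `R`
only rescales rows and columns by unimodular phases.
-/

open Matrix Complex ComplexConjugate

theorem sum_mul_ofReal_eq_zero_of_forall_sum_mul_exp_eq_zero {ι : Type*} [Fintype ι]
    (c : ι → ℂ) (a : ι → ℝ) (h : ∀ t : ℝ, ∑ k, c k * exp (I * t * a k) = 0) :
    ∑ k, c k * a k = 0 := by
  have hderiv : HasDerivAt (fun t : ℝ => ∑ k, c k * exp (I * t * a k))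
      (∑ k, c k * (I * a k)) 0 := by
    refine HasDerivAt.fun_sum fun k _ => ?_
    have := (((hasDerivAt_id (0 : ℂ)).const_mul I).mul_const (a k : ℂ)).cexp.const_mul (c k)
    simpa using this.comp_ofReal
  have hzero : ∑ k, c k * (I * a k) = 0 :=
    hderiv.unique (by simpa only [funext h] using hasDerivAt_const (0 : ℝ) (0 : ℂ))
  simp_rw [mul_left_comm _ I, ← Finset.mul_sum, mul_eq_zero, I_ne_zero, false_or] at hzero
  exact hzero

noncomputable def phaseTwist {m l : Type*} (H : Matrix m l ℂ) (R : Matrix m l ℝ) (t : ℝ) :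
    Matrix m l ℂ :=
  of fun a b => H a b * exp (I * t * R a b)

theorem phaseTwist_mul_conjTranspose_apply {m l : Type*} [Fintype l]
    (H : Matrix m l ℂ) (R : Matrix m l ℝ) (t : ℝ) (i j : m) :
    (phaseTwist H R t * (phaseTwist H R t)ᴴ) i j =
      ∑ k, H i k * conj (H j k) * exp (I * t * ((R i k - R j k : ℝ) : ℂ)) := by
  simp only [mul_apply, conjTranspose_apply, phaseTwist, of_apply]
  refine Finset.sum_congr rfl fun k _ => ?_
  rw [star_mul', star_def, ← exp_conj]
  simp only [map_mul, conj_I, conj_ofReal, ofReal_sub]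
  rw [show I * t * (R i k - R j k : ℂ) = I * t * R i k + -I * t * R j k by ring, exp_add]
  ring

theorem sum_mul_conj_mul_sub_eq_zero_of_phaseTwist_rows_orthogonal {m l : Type*} [Fintype l]
    (H : Matrix m l ℂ) (R : Matrix m l ℝ) (i j : m)
    (h : ∀ t, (phaseTwist H R t * (phaseTwist H R t)ᴴ) i j = 0) :
    ∑ k, H i k * conj (H j k) * ((R i k : ℂ) - R j k) = 0 := by
  simpa only [ofReal_sub] using sum_mul_ofReal_eq_zero_of_forall_sum_mul_exp_eq_zero _ _
    fun t => (phaseTwist_mul_conjTranspose_apply H R t i j).symm.trans (h t)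

theorem phaseTwist_eq_diagonal_mul_mul_diagonal {m l : Type*} [Fintype m] [Fintype l]
    [DecidableEq m] [DecidableEq l]
    (H : Matrix m l ℂ) (R : Matrix m l ℝ) (r : m → ℝ) (c : l → ℝ)
    (hR : ∀ a b, R a b = r a + c b) (t : ℝ) :
    phaseTwist H R t =
      diagonal (fun a => exp (I * t * r a)) * H * diagonal (fun b => exp (I * t * c b)) := by
  ext a b
  simp only [phaseTwist, of_apply]
  rw [mul_diagonal, diagonal_mul, hR, ofReal_add, mul_add, exp_add]
  ring

theorem defect_zero_isolated_general {n : ℕ} (H : Matrix (Fin n) (Fin n) ℂ)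
    (hdefect : ∀ R : Matrix (Fin n) (Fin n) ℝ,
      (∀ i j : Fin n, i < j →
        ∑ k, H i k * conj (H j k) * (((R i k : ℝ) : ℂ) - ((R j k : ℝ) : ℂ)) = 0) →
      ∃ r c : Fin n → ℝ, ∀ a b, R a b = r a + c b) :
    ∀ R : Matrix (Fin n) (Fin n) ℝ,
      (∀ t : ℝ, IsCHM (fun a b => H a b * Complex.exp (Complex.I * (t : ℂ) * (R a b : ℂ)))) →
      ∃ r c : Fin n → ℝ, (∀ a b, R a b = r a + c b) ∧
        ∀ t : ℝ, (fun a b => H a b * Complex.exp (Complex.I * (t : ℂ) * (R a b : ℂ))) =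
          Matrix.diagonal (fun a => Complex.exp (Complex.I * (t : ℂ) * (r a : ℂ))) * H *
            Matrix.diagonal (fun b => Complex.exp (Complex.I * (t : ℂ) * (c b : ℂ))) := by
  intro R hfam
  have hrows : ∀ t, phaseTwist H R t * (phaseTwist H R t)ᴴ = (n : ℂ) • 1 := fun t => (hfam t).2
  obtain ⟨r, c, hrc⟩ := hdefect R fun i j hij =>
    sum_mul_conj_mul_sub_eq_zero_of_phaseTwist_rows_orthogonal H R i j fun t => by
      simp [hrows t, hij.ne]
  exact ⟨r, c, hrc, phaseTwist_eq_diagonal_mul_mul_diagonal H R r c hrc⟩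

/-- If `H` has defect zero — every real solution of the defect linear system is a trivial
one, of the form `R_{a,b} = rₐ + c_b` — then any one-parameter family
`t ↦ H ∘ EXP(i·t·R)` of complex Hadamard matrices through `H` comes from a trivial `R`,
i.e. it is obtained from `H` by multiplication with unitary diagonal matrices. -/
theorem defect_zero_isolated {n : ℕ} (H : Matrix (Fin n) (Fin n) ℂ) (hH : IsCHM H)
    (hdefect : ∀ R : Matrix (Fin n) (Fin n) ℝ,
      (∀ i j : Fin n, i < j →
        ∑ k, H i k * conj (H j k) * (((R i k : ℝ) : ℂ) - ((R j k : ℝ) : ℂ)) = 0) →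
      ∃ r c : Fin n → ℝ, ∀ a b, R a b = r a + c b) :
    ∀ R : Matrix (Fin n) (Fin n) ℝ,
      (∀ t : ℝ, IsCHM (fun a b => H a b * Complex.exp (Complex.I * (t : ℂ) * (R a b : ℂ)))) →
      ∃ r c : Fin n → ℝ, (∀ a b, R a b = r a + c b) ∧
        ∀ t : ℝ, (fun a b => H a b * Complex.exp (Complex.I * (t : ℂ) * (R a b : ℂ))) =
          Matrix.diagonal (fun a => Complex.exp (Complex.I * (t : ℂ) * (r a : ℂ))) * H *
            Matrix.diagonal (fun b => Complex.exp (Complex.I * (t : ℂ) * (c b : ℂ))) :=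
  defect_zero_isolated_general H hdefect
end
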